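/- arXiv:1309.3113 — 2 statements merged into one kernel-verified Lean document; each statement's English description precedes it below -/
import Mathlib

section
/- Let e : L → C be a canonical extension of a bounded lattice L and let M ⊆ L be finite. Then M is join-admissible if and only if for every completely join-irreducible x ∈ J∞(C), x ≤ ⨆e[M] implies x ≤ e(m) for some m ∈ M. -/
/-- A finite subset `M` of a bounded lattice is join-admissible if its join
distributes over all meets with elements of the lattice. -/
def JoinAdmissible {L : Type*} [Lattice L] [BoundedOrder L] (M : Finset L) : Prop :=
  ∀ a : L, a ⊓ M.sup id = M.sup fun m => a ⊓ m

/-- An a-ideal: a downward-closed subset closed under admissible joins. -/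
def IsAIdeal {L : Type*} [Lattice L] [BoundedOrder L] (A : Set L) : Prop :=
  (∀ a ∈ A, ∀ b, b ≤ a → b ∈ A) ∧
  ∀ M : Finset L, ↑M ⊆ A → JoinAdmissible M → M.sup id ∈ A

/-- The smallest a-ideal containing `T`. -/
def aIdealGen {L : Type*} [Lattice L] [BoundedOrder L] (T : Set L) : Set L :=
  ⋂₀ {A : Set L | IsAIdeal A ∧ T ⊆ A}

/-- An element `x` of a complete lattice is completely join-irreducible if
`x ∈ S` whenever `x = ⨆ S`. -/
def CompletelyJoinIrreducible {C : Type*} [CompleteLattice C] (x : C) : Prop :=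
  ∀ S : Set C, x = sSup S → x ∈ S

/-- An element `y` of a complete lattice is completely meet-irreducible if
`y ∈ S` whenever `y = ⨅ S`. -/
def CompletelyMeetIrreducible {C : Type*} [CompleteLattice C] (y : C) : Prop :=
  ∀ S : Set C, y = sInf S → y ∈ S

/-- `e : L → C` is a canonical extension of the bounded lattice `L`: an injective
bounded-lattice homomorphism into a complete lattice `C` which is dense and compact. -/
def IsCanonicalExtension {L C : Type*} [Lattice L] [BoundedOrder L] [CompleteLattice C]
    (e : L → C) : Prop :=
  Function.Injective e ∧
  (∀ a b : L, e (a ⊓ b) = e a ⊓ e b) ∧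
  (∀ a b : L, e (a ⊔ b) = e a ⊔ e b) ∧
  e ⊥ = ⊥ ∧ e ⊤ = ⊤ ∧
  -- denseness
  (∀ u : C,
    u = sSup {v : C | ∃ S : Set L, v = sInf (e '' S) ∧ v ≤ u} ∧
    u = sInf {v : C | ∃ T : Set L, v = sSup (e '' T) ∧ u ≤ v}) ∧
  -- compactness
  (∀ S T : Set L, sInf (e '' S) ≤ sSup (e '' T) →
    ∃ S' T' : Finset L, ↑S' ⊆ S ∧ ↑T' ⊆ T ∧ S'.inf id ≤ T'.sup id)


/-!
Call `⨅ e[S]` closed and `⨆ e[T]` open. By density a completely join-irreducible `x` is the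
join of the closed elements below it, hence closed. If `M` is join-admissible and
`x ≤ e (⋁ M)`, test `x ≤ ⨆ₘ (x ⊓ e m)` against an open `y` above the right-hand side:
compactness turns each `x ⊓ e m ≤ y` into `c_m, t_m ∈ L` with `x ≤ e c_m`, `c_m ⊓ m ≤ t_m` and
`e t_m ≤ y`, and admissibility at `a = ⋀ₘ c_m` gives `x ≤ y`. So `x = ⨆ₘ (x ⊓ e m)`, and
irreducibility yields some `x ≤ e m`.

Conversely, if `a ⊓ ⋁ M ≰ c := ⋁ₘ (a ⊓ m)`, compactness shows that the closed elements not
below `e c` are closed under meets of chains, so Zorn gives a minimal one `j ≤ e (a ⊓ ⋁ M)`.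
Density and minimality make `j` completely join-irreducible, so `j ≤ e m` for some `m ∈ M`,
whence `j ≤ e (a ⊓ m) ≤ e c`.
-/

open Set

theorem exists_le_minimal_of_isChain {α : Type*} [PartialOrder α] {s : Set α}
    (hs : ∀ c ⊆ s, IsChain (· ≤ ·) c → c.Nonempty → ∃ lb ∈ s, lb ∈ lowerBounds c)
    {x : α} (hx : x ∈ s) : ∃ m ≤ x, Minimal (· ∈ s) m := by
  obtain ⟨m, hxm, hm⟩ := zorn_le_nonempty₀ (α := αᵒᵈ) s
    (fun c hcs hc y hy => hs c hcs hc.symm ⟨y, hy⟩) x hx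
  exact ⟨m, hxm, hm.of_dual⟩

section ClosedElement

variable {L C : Type*} [CompleteLattice C] {e : L → C}

def IsClosedElement (e : L → C) (x : C) : Prop :=
  ∃ S : Set L, x = sInf (e '' S)

theorem IsClosedElement.sInf_image_setOf_le {x : C} (hx : IsClosedElement e x) :
    sInf (e '' {a | x ≤ e a}) = x := by
  obtain ⟨S, rfl⟩ := hx
  refine le_antisymm (sInf_le_sInf (image_mono fun a ha => sInf_le (mem_image_of_mem e ha))) ?_
  exact le_sInf (by rintro _ ⟨a, ha, rfl⟩; exact ha)

theorem sInf_image_biUnion_setOf_le {D : Set C} (hD : ∀ z ∈ D, IsClosedElement e z) :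
    sInf (e '' ⋃ z ∈ D, {a | z ≤ e a}) = sInf D := by
  rw [sInf_image, iInf_iUnion, sInf_eq_iInf]
  refine iInf_congr fun z => ?_
  rw [iInf_iUnion]
  refine iInf_congr fun hz => ?_
  rw [← sInf_image, (hD z hz).sInf_image_setOf_le]

theorem isClosedElement_sInf {D : Set C} (hD : ∀ z ∈ D, IsClosedElement e z) :
    IsClosedElement e (sInf D) :=
  ⟨_, (sInf_image_biUnion_setOf_le hD).symm⟩

end ClosedElement

theorem CompletelyJoinIrreducible.exists_le_of_le_finset_sup {C ι : Type*} [CompleteLattice C]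
    {x : C} (hx : CompletelyJoinIrreducible x) {s : Finset ι} {f : ι → C}
    (hle : x ≤ s.sup fun i => x ⊓ f i) : ∃ i ∈ s, x ≤ f i := by
  have hx_eq : x = sSup ((fun i => x ⊓ f i) '' s) := by
    rw [← Finset.sup_eq_sSup_image]
    exact le_antisymm hle (Finset.sup_le fun _ _ => inf_le_left)
  obtain ⟨i, hi, hxi⟩ := hx _ hx_eq
  exact ⟨i, hi, inf_eq_left.mp hxi⟩

namespace IsCanonicalExtension

variable {L C : Type*} [Lattice L] [BoundedOrder L] [CompleteLattice C] {e : L → C}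

def toBoundedLatticeHom (h : IsCanonicalExtension e) : BoundedLatticeHom L C where
  toFun := e
  map_sup' := h.2.2.1
  map_inf' := h.2.1
  map_top' := h.2.2.2.2.1
  map_bot' := h.2.2.2.1

theorem map_inf (h : IsCanonicalExtension e) (a b : L) : e (a ⊓ b) = e a ⊓ e b :=
  h.2.1 a b

theorem monotone (h : IsCanonicalExtension e) : Monotone e :=
  OrderHomClass.mono h.toBoundedLatticeHom

theorem le_iff_le (h : IsCanonicalExtension e) {a b : L} : e a ≤ e b ↔ a ≤ b :=
  ⟨fun hab => inf_eq_left.mp (h.1 (by rw [h.map_inf, inf_eq_left.mpr hab])), fun hab =>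
    h.monotone hab⟩

theorem map_finset_sup (h : IsCanonicalExtension e) {ι : Type*} (s : Finset ι) (f : ι → L) :
    e (s.sup f) = s.sup (e ∘ f) :=
  _root_.map_finset_sup h.toBoundedLatticeHom s f

theorem map_finset_inf (h : IsCanonicalExtension e) {ι : Type*} (s : Finset ι) (f : ι → L) :
    e (s.inf f) = s.inf (e ∘ f) :=
  _root_.map_finset_inf h.toBoundedLatticeHom s f

theorem sSup_image_finset (h : IsCanonicalExtension e) (M : Finset L) :
    sSup (e '' (M : Set L)) = e (M.sup id) := by
  rw [h.map_finset_sup, Function.comp_id, Finset.sup_eq_sSup_image]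

theorem isClosedElement_of_completelyJoinIrreducible (h : IsCanonicalExtension e) {x : C}
    (hx : CompletelyJoinIrreducible x) : IsClosedElement e x := by
  obtain ⟨S, hS, -⟩ := hx _ (h.2.2.2.2.2.1 x).1
  exact ⟨S, hS⟩

theorem le_of_forall_sInf_image_le (h : IsCanonicalExtension e) {u c : C}
    (hu : ∀ S : Set L, sInf (e '' S) ≤ u → sInf (e '' S) ≤ c) : u ≤ c :=
  (h.2.2.2.2.2.1 u).1.trans_le (sSup_le (by rintro _ ⟨S, rfl, hSu⟩; exact hu S hSu))

theorem le_of_forall_le_sSup_image (h : IsCanonicalExtension e) {x u : C}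
    (hu : ∀ T : Set L, u ≤ sSup (e '' T) → x ≤ sSup (e '' T)) : x ≤ u :=
  (le_sInf (by rintro _ ⟨T, rfl, huT⟩; exact hu T huT)).trans_eq (h.2.2.2.2.2.1 u).2.symm

theorem exists_finset_inf_le (h : IsCanonicalExtension e) {S : Set L} {c : L}
    (hS : sInf (e '' S) ≤ e c) : ∃ S' : Finset L, ↑S' ⊆ S ∧ S'.inf id ≤ c := by
  obtain ⟨S', T', hS', hT', hle⟩ :=
    h.2.2.2.2.2.2 S {c} (by rwa [image_singleton, sSup_singleton])
  exact ⟨S', hS', hle.trans (Finset.sup_le fun t ht => (hT' ht).le)⟩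

theorem exists_le_inf_le_of_inf_le_sSup (h : IsCanonicalExtension e) {x : C}
    (hx : IsClosedElement e x) (m : L) {T : Set L} (hxT : x ⊓ e m ≤ sSup (e '' T)) :
    ∃ c t : L, x ≤ e c ∧ c ⊓ m ≤ t ∧ e t ≤ sSup (e '' T) := by
  classical
  have hinsert : sInf (e '' insert m {a | x ≤ e a}) ≤ sSup (e '' T) := by
    rwa [image_insert_eq, sInf_insert, hx.sInf_image_setOf_le, inf_comm]
  obtain ⟨S', T', hS', hT', hle⟩ := h.2.2.2.2.2.2 _ _ hinsert
  refine ⟨(S'.erase m).inf id, T'.sup id, ?_, ?_, ?_⟩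
  · rw [h.map_finset_inf]
    refine Finset.le_inf fun a ha => ?_
    obtain ⟨hne, haS⟩ := Finset.mem_erase.mp ha
    exact (hS' haS).resolve_left hne
  · calc (S'.erase m).inf id ⊓ m = (insert m (S'.erase m)).inf id := by
          rw [Finset.inf_insert, id, inf_comm]
      _ ≤ S'.inf id := Finset.inf_mono (Finset.insert_erase_subset m S')
      _ ≤ T'.sup id := hle
  · rw [h.map_finset_sup]
    exact Finset.sup_le fun t ht => le_sSup (mem_image_of_mem e (hT' ht))

theorem le_finset_sup_inf_of_joinAdmissible (h : IsCanonicalExtension e) {M : Finset L}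
    (hM : JoinAdmissible M) {x : C} (hx : IsClosedElement e x) (hxM : x ≤ e (M.sup id)) :
    x ≤ M.sup fun m => x ⊓ e m := by
  refine h.le_of_forall_le_sSup_image fun T hT => ?_
  have hmT : ∀ m ∈ M, x ⊓ e m ≤ sSup (e '' T) := fun m hm =>
    (Finset.le_sup (f := fun m => x ⊓ e m) hm).trans hT
  choose! c t hxc hct hty using fun m hm => h.exists_le_inf_le_of_inf_le_sSup hx m (hmT m hm)
  calc x ≤ e (M.inf c ⊓ M.sup id) := by
        rw [h.map_inf, h.map_finset_inf]
        exact le_inf (Finset.le_inf hxc) hxM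
    _ ≤ e (M.sup t) := h.monotone <| by
        rw [hM]
        exact Finset.sup_mono_fun fun m hm =>
          (inf_le_inf_right m (Finset.inf_le hm)).trans (hct m hm)
    _ ≤ sSup (e '' T) := by
        rw [h.map_finset_sup]
        exact Finset.sup_le hty

theorem completelyJoinIrreducible_of_minimal (h : IsCanonicalExtension e) {j c : C}
    (hjc : ¬ j ≤ c) (hmin : ∀ v, IsClosedElement e v → v ≤ j → ¬ v ≤ c → v = j) :
    CompletelyJoinIrreducible j := by
  intro S hS
  by_contra hjS
  refine hjc ?_
  rw [hS]
  refine sSup_le fun s hs => h.le_of_forall_sInf_image_le fun V hV => ?_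
  by_contra hVc
  have hsj : s ≤ j := hS ▸ le_sSup hs
  have hVj : sInf (e '' V) = j := hmin _ ⟨V, rfl⟩ (hV.trans hsj) hVc
  have hsj_eq : s = j := le_antisymm hsj (hVj ▸ hV)
  exact hjS (hsj_eq ▸ hs)

theorem not_sInf_le_of_isChain (h : IsCanonicalExtension e) {D : Set C}
    (hD : ∀ z ∈ D, IsClosedElement e z) (hne : D.Nonempty) (hchain : IsChain (· ≤ ·) D)
    {c : L} (hc : ∀ z ∈ D, ¬ z ≤ e c) : ¬ sInf D ≤ e c := by
  rw [← sInf_image_biUnion_setOf_le hD]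
  intro hle
  obtain ⟨S', hS', hS'c⟩ := h.exists_finset_inf_le hle
  have hdir : DirectedOn (fun z w => {a | z ≤ e a} ⊆ {a | w ≤ e a}) D := fun z hz w hw => by
    rcases hchain.total hz hw with hzw | hwz
    · exact ⟨z, hz, subset_rfl, fun a ha => hzw.trans ha⟩
    · exact ⟨w, hw, fun a ha => hwz.trans ha, subset_rfl⟩
  obtain ⟨z, hz, hzS'⟩ := hdir.exists_mem_subset_of_finset_subset_biUnion hne hS'
  have hzS'_inf : z ≤ e (S'.inf id) := by
    rw [h.map_finset_inf]
    exact Finset.le_inf fun a ha => hzS' ha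
  exact hc z hz (hzS'_inf.trans (h.monotone hS'c))

theorem exists_completelyJoinIrreducible_le_not_le (h : IsCanonicalExtension e) {b c : L}
    (hbc : ¬ b ≤ c) : ∃ j : C, CompletelyJoinIrreducible j ∧ j ≤ e b ∧ ¬ j ≤ e c := by
  let 𝒞 : Set C := {z | IsClosedElement e z ∧ ¬ z ≤ e c}
  have hb𝒞 : e b ∈ 𝒞 := ⟨⟨{b}, by simp⟩, h.le_iff_le.not.mpr hbc⟩
  obtain ⟨j, hjb, hjmin⟩ := exists_le_minimal_of_isChain (s := 𝒞) (fun D hD hchain hne =>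
      ⟨sInf D, ⟨isClosedElement_sInf fun z hz => (hD hz).1,
        h.not_sInf_le_of_isChain (fun z hz => (hD hz).1) hne hchain fun z hz => (hD hz).2⟩,
        fun _ hz => sInf_le hz⟩) hb𝒞
  exact ⟨j, h.completelyJoinIrreducible_of_minimal hjmin.prop.2 fun v hv hvj hvc =>
    hjmin.eq_of_le ⟨hv, hvc⟩ hvj, hjb, hjmin.prop.2⟩

end IsCanonicalExtension

/-- A finite subset `M` of a bounded lattice `L` is join-admissible iff, in a canonical
extension `e : L → C`, every completely join-irreducible element below `⨆ e[M]` is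
below `e m` for some `m ∈ M`. -/
theorem joinAdmissible_iff_canonicalExtension {L C : Type*} [Lattice L] [BoundedOrder L]
    [CompleteLattice C] (e : L → C) (h : IsCanonicalExtension e) (M : Finset L) :
    JoinAdmissible M ↔
      ∀ x : C, CompletelyJoinIrreducible x → x ≤ sSup (e '' (M : Set L)) →
        ∃ m ∈ M, x ≤ e m := by
  rw [h.sSup_image_finset]
  constructor
  · intro hM x hx hxM
    exact hx.exists_le_of_le_finset_sup <| h.le_finset_sup_inf_of_joinAdmissible hM
      (h.isClosedElement_of_completelyJoinIrreducible hx) hxM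
  · intro hJ a
    refine le_antisymm ?_ (Finset.sup_le fun m hm => inf_le_inf_left a (Finset.le_sup (f := id) hm))
    by_contra hbc
    obtain ⟨j, hj, hjb, hjc⟩ := h.exists_completelyJoinIrreducible_le_not_le hbc
    obtain ⟨m, hm, hjm⟩ := hJ j hj (hjb.trans (h.monotone inf_le_right))
    refine hjc (le_trans ?_ (h.monotone (Finset.le_sup (f := fun m => a ⊓ m) hm)))
    rw [h.map_inf]
    exact le_inf (hjb.trans (h.monotone inf_le_left)) hjm
end

section
/- Let L be a bounded lattice and let D^∧(L) denote the set of finitely generated a-ideals of L ordered by inclusion, with bottom ⟨∅⟩_ai, top L, meet given by intersection and join given by ⟨T⟩_ai ∨ ⟨U⟩_ai = ⟨T ∪ U⟩_ai, and let η(a) = ↓a. Then for every bounded distributive lattice D and every function f : L → D preserving finite meets and admissible joins, there exists a unique bounded lattice homomorphism f̂ : D^∧(L) → D with f̂ ∘ η = f; moreover f̂ is given by f̂(⟨T⟩_ai) = ⋁_{t∈T} f(t) for finite T ⊆ L (in particular this expression is independent of the choice of finite generating set T). -/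
/-- The distributive ∧-envelope `D^∧(L)`: the finitely generated a-ideals of `L`. -/
abbrev FGA (L : Type*) [Lattice L] [BoundedOrder L] : Type _ :=
  {A : Set L // ∃ T : Finset L, A = aIdealGen (T : Set L)}

/-- `F : D^∧(L) → D` is a bounded lattice homomorphism with respect to the structure of
`D^∧(L)`: bottom `⟨∅⟩_ai`, top `L`, meet given by intersection, and join given by
`⟨T⟩_ai ∨ ⟨U⟩_ai = ⟨T ∪ U⟩_ai`. -/
def IsFGAHom {L D : Type*} [Lattice L] [BoundedOrder L] [DistribLattice D] [BoundedOrder D]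
    (F : FGA L → D) : Prop :=
  (∀ I : FGA L, (I : Set L) = aIdealGen (∅ : Set L) → F I = ⊥) ∧
  (∀ I : FGA L, (I : Set L) = Set.univ → F I = ⊤) ∧
  (∀ I J K : FGA L, (K : Set L) = (I : Set L) ∩ (J : Set L) → F K = F I ⊓ F J) ∧
  (∀ (T U : Finset L) (I J K : FGA L), (I : Set L) = aIdealGen (T : Set L) →
    (J : Set L) = aIdealGen (U : Set L) →
    (K : Set L) = aIdealGen ((T : Set L) ∪ (U : Set L)) → F K = F I ⊔ F J)

section DistEnvAux
variable {L D : Type*} [Lattice L] [BoundedOrder L] [DistribLattice D] [BoundedOrder D]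

private lemma isAIdeal_aIdealGen' (T : Set L) : IsAIdeal (aIdealGen T) := by
  constructor
  · intro a ha b hb A hA
    exact hA.1.1 a (ha A hA) b hb
  · intro M hM hadm A hA
    exact hA.1.2 M (fun m hm => hM hm A hA) hadm

private lemma subset_aIdealGen' (T : Set L) : T ⊆ aIdealGen T :=
  fun _ hx _ hA => hA.2 hx

private lemma aIdealGen_subset' {T A : Set L} (hA : IsAIdeal A) (hT : T ⊆ A) :
    aIdealGen T ⊆ A :=
  Set.sInter_subset_of_mem ⟨hA, hT⟩

private lemma Iic_eq_aIdealGen' (a : L) : Set.Iic a = aIdealGen {a} := by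
  apply subset_antisymm
  · intro x hx
    exact (isAIdeal_aIdealGen' _).1 a (subset_aIdealGen' {a} rfl) x hx
  · apply aIdealGen_subset'
    · exact ⟨fun p hp b hb => le_trans hb hp,
        fun M hM _ => Finset.sup_le fun m hm => hM hm⟩
    · simp

variable (f : L → D) (hmeet : ∀ a b : L, f (a ⊓ b) = f a ⊓ f b)
  (hadm : ∀ M : Finset L, JoinAdmissible M → f (M.sup id) = M.sup f)

include hmeet hadm in
private lemma f_le_sup' (T : Finset L) {x : L} (hx : x ∈ aIdealGen (T : Set L)) :
    f x ≤ T.sup f := by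
  have hmono : ∀ a b : L, b ≤ a → f b ≤ f a := by
    intro a b h
    calc f b = f (b ⊓ a) := by rw [inf_eq_left.mpr h]
    _ = f b ⊓ f a := hmeet _ _
    _ ≤ f a := inf_le_right
  have hsub : aIdealGen (T : Set L) ⊆ {y | f y ≤ T.sup f} := by
    apply aIdealGen_subset'
    · constructor
      · intro a ha b hb
        exact le_trans (hmono a b hb) ha
      · intro M hM hMadm
        show f (M.sup id) ≤ _
        rw [hadm M hMadm]
        exact Finset.sup_le fun m hm => hM hm
    · intro t ht
      exact Finset.le_sup (Finset.mem_coe.mp ht)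
  exact hsub hx

include hmeet hadm in
private lemma sup_eq_of_gen_eq' {T U : Finset L}
    (h : aIdealGen (T : Set L) = aIdealGen (U : Set L)) : T.sup f = U.sup f := by
  apply le_antisymm
  · exact Finset.sup_le fun t ht => f_le_sup' f hmeet hadm U
      (h ▸ subset_aIdealGen' _ (Finset.mem_coe.mpr ht))
  · exact Finset.sup_le fun u hu => f_le_sup' f hmeet hadm T
      (h ▸ subset_aIdealGen' _ (Finset.mem_coe.mpr hu))

end DistEnvAux

/-- Universal property of the distributive ∧-envelope: any map `f : L → D` into a bounded
distributive lattice preserving finite meets and admissible joins extends uniquely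
to a bounded lattice homomorphism `f̂ : D^∧(L) → D` along `η : a ↦ ↓a`; moreover
`f̂(⟨T⟩_ai) = ⋁_{t ∈ T} f t`. -/

theorem distributiveEnvelope_universalProperty {L D : Type*} [Lattice L] [BoundedOrder L]
    [DistribLattice D] [BoundedOrder D] (f : L → D)
    (htop : f ⊤ = ⊤) (hmeet : ∀ a b : L, f (a ⊓ b) = f a ⊓ f b)
    (hadm : ∀ M : Finset L, JoinAdmissible M → f (M.sup id) = M.sup f) :
    -- `η(a) = ↓a` is indeed a finitely generated a-ideal
    (∀ a : L, ∃ T : Finset L, Set.Iic a = aIdealGen (T : Set L)) ∧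
    ∃ F : FGA L → D,
      (IsFGAHom F ∧
        (∀ (a : L) (I : FGA L), (I : Set L) = Set.Iic a → F I = f a) ∧
        -- moreover, `F` is given by the explicit formula
        (∀ (T : Finset L) (I : FGA L), (I : Set L) = aIdealGen (T : Set L) →
          F I = T.sup f)) ∧
      -- uniqueness
      ∀ G : FGA L → D, IsFGAHom G →
        (∀ (a : L) (I : FGA L), (I : Set L) = Set.Iic a → G I = f a) → G = F := by

  classical
  -- the extension
  set F : FGA L → D := fun I => (Classical.choose I.2).sup f with hF
  -- the explicit formula
  have hform : ∀ (T : Finset L) (I : FGA L), (I : Set L) = aIdealGen (T : Set L) →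
      F I = T.sup f := by
    intro T I hI
    have hspec := Classical.choose_spec I.2
    exact sup_eq_of_gen_eq' f hmeet hadm (hspec ▸ hI ▸ rfl)
  have hIic : ∀ a : L, Set.Iic a = aIdealGen (({a} : Finset L) : Set L) := by
    intro a
    rw [Finset.coe_singleton]
    exact Iic_eq_aIdealGen' a
  refine ⟨fun a => ⟨{a}, hIic a⟩, F, ⟨⟨?_, ?_, ?_, ?_⟩, ?_, hform⟩, ?_⟩
  · -- bottom
    intro I hI
    have : F I = (∅ : Finset L).sup f := by
      apply hform
      rw [hI, Finset.coe_empty]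
    simpa using this
  · -- top
    intro I hI
    obtain ⟨T, hT⟩ := I.2
    rw [hform T I hT]
    have htopmem : (⊤ : L) ∈ aIdealGen ((T : Finset L) : Set L) := by
      rw [← hT, hI]; trivial
    have := f_le_sup' f hmeet hadm T htopmem
    rw [htop] at this
    exact le_antisymm le_top this
  · -- meet
    intro I J K hK
    obtain ⟨T, hT⟩ := I.2
    obtain ⟨U, hU⟩ := J.2
    obtain ⟨V, hV⟩ := K.2
    rw [hform T I hT, hform U J hU, hform V K hV]
    apply le_antisymm
    · apply le_inf
      · refine Finset.sup_le fun v hv => f_le_sup' f hmeet hadm T ?_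
        have : v ∈ (K : Set L) := hV ▸ subset_aIdealGen' _ (Finset.mem_coe.mpr hv)
        rw [hK] at this
        exact hT ▸ this.1
      · refine Finset.sup_le fun v hv => f_le_sup' f hmeet hadm U ?_
        have : v ∈ (K : Set L) := hV ▸ subset_aIdealGen' _ (Finset.mem_coe.mpr hv)
        rw [hK] at this
        exact hU ▸ this.2
    · rw [Finset.sup_inf_distrib_right]
      refine Finset.sup_le fun t ht => ?_
      rw [Finset.sup_inf_distrib_left]
      refine Finset.sup_le fun u hu => ?_
      rw [← hmeet]
      refine f_le_sup' f hmeet hadm V ?_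
      rw [← hV, hK]
      constructor
      · exact (hT ▸ (isAIdeal_aIdealGen' _).1 t
          (subset_aIdealGen' _ (Finset.mem_coe.mpr ht)) (t ⊓ u) inf_le_left : _)
      · exact (hU ▸ (isAIdeal_aIdealGen' _).1 u
          (subset_aIdealGen' _ (Finset.mem_coe.mpr hu)) (t ⊓ u) inf_le_right : _)
  · -- join
    intro T U I J K hI hJ hK
    rw [hform T I hI, hform U J hJ, hform (T ∪ U) K (by rw [hK, Finset.coe_union])]
    exact Finset.sup_union
  · -- agrees with f along eta
    intro a I hI
    rw [hform {a} I (by rw [hI]; exact hIic a), Finset.sup_singleton]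
  · -- uniqueness
    intro G hG heta
    have key : ∀ (T : Finset L) (I : FGA L), (I : Set L) = aIdealGen (T : Set L) →
        G I = T.sup f := by
      intro T
      induction T using Finset.induction_on with
      | empty =>
        intro I hI
        rw [hG.1 I (by rw [hI, Finset.coe_empty]), Finset.sup_empty]
      | @insert a S ha ih =>
        intro I hI
        set Ia : FGA L := ⟨aIdealGen (({a} : Finset L) : Set L), ⟨({a} : Finset L), rfl⟩⟩ with hIa
        set IS : FGA L := ⟨aIdealGen ((S : Finset L) : Set L), ⟨S, rfl⟩⟩ with hIS
        have hjoin := hG.2.2.2 {a} S Ia IS I rfl rfl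
          (by rw [hI, Finset.coe_insert, Finset.coe_singleton, Set.singleton_union])
        rw [hjoin, heta a Ia (hIic a).symm, ih IS rfl, Finset.sup_insert]
    funext I
    obtain ⟨T, hT⟩ := I.2
    rw [key T I hT, hform T I hT]
end
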